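/- Let K be an algebraically closed field and 1 ≤ m ≤ n−1. The representation of SL_n(K) on ⋀^m K^n via g ↦ ⋀^m g is irreducible: the only K-subspaces U ⊆ ⋀^m K^n satisfying (⋀^m g)(U) ⊆ U for all g ∈ SL_n(K) are U = 0 and U = ⋀^m K^n. -/

import Mathlib

open Matrix Finset

/-- The set of `m`-element subsets of `Fin n`, indexing the standard basis `e_I` of `⋀^m R^n`. -/
abbrev MSub (n m : ℕ) := {s : Finset (Fin n) // s.card = m}

/-- The matrix of the `m`-th exterior power `⋀^m g` of `g` in the standard basis `e_I` of
`⋀^m R^n`: its `(I, J)` entry is the `m × m` minor of `g` with rows `I` and columns `J`. -/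
def extPow {R : Type*} [CommRing R] (n m : ℕ) (g : Matrix (Fin n) (Fin n) R) :
    Matrix (MSub n m) (MSub n m) R :=
  Matrix.of fun I J =>
    (Matrix.of fun a b : Fin m => g (I.1.orderEmbOfFin I.2 a) (J.1.orderEmbOfFin J.2 b)).det

/-!
Scaled to determinant one, the torus element `diag(t, t², t⁴, …, t^(2^(n-1)))` acts on the basis
vector `e_I` of `⋀^m K^n` by `t^(∑_{i ∈ I} 2^i)`, up to a common factor; for `t` not a root of
unity of small order these scalars are pairwise distinct, since binary expansions are unique.
Lagrange interpolation in this diagonal operator then shows that an invariant subspace contains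
`(u I) e_I` whenever it contains `u`, so a nonzero one contains some `e_J`. A scaled permutation
matrix sending `J` to `I` has a nonzero `(I, J)` minor, so the subspace contains every `e_I`.
-/

namespace Submodule

variable {ι K : Type*} [Fintype ι] [DecidableEq ι] [Field K] {w : ι → K}
  {U : Submodule K (ι → K)}

theorem eval_mul_mem_of_diagonal_mulVec_mem (hU : ∀ u ∈ U, diagonal w *ᵥ u ∈ U)
    (p : Polynomial K) {u : ι → K} (hu : u ∈ U) : (fun i => p.eval (w i) * u i) ∈ U := by
  induction p using Polynomial.induction_on with
  | C a => simpa [Pi.smul_def] using U.smul_mem a hu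
  | add p q hp hq =>
    simp only [Polynomial.eval_add, add_mul]
    exact U.add_mem hp hq
  | monomial k a h =>
    convert hU _ h using 1
    ext i
    simp only [Polynomial.eval_mul, Polynomial.eval_C, Polynomial.eval_pow, Polynomial.eval_X,
      mulVec_diagonal]
    ring

theorem single_mem_of_diagonal_mulVec_mem (hw : Function.Injective w)
    (hU : ∀ u ∈ U, diagonal w *ᵥ u ∈ U) {u : ι → K} (hu : u ∈ U) (i : ι) :
    Pi.single i (u i) ∈ U := by
  convert eval_mul_mem_of_diagonal_mulVec_mem hU (Lagrange.basis univ w i) hu using 1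
  ext j
  rcases eq_or_ne j i with rfl | hji
  · simp [Lagrange.eval_basis_self hw.injOn (mem_univ j)]
  · simp [hji, Lagrange.eval_basis_of_ne hji.symm (mem_univ j)]

theorem eq_bot_or_eq_top_of_diagonal_mulVec_mem (hw : Function.Injective w)
    (hU : ∀ u ∈ U, diagonal w *ᵥ u ∈ U)
    (hentry : ∀ i j, ∃ M : Matrix ι ι K, M i j ≠ 0 ∧ ∀ u ∈ U, M *ᵥ u ∈ U) :
    U = ⊥ ∨ U = ⊤ := by
  refine or_iff_not_imp_left.2 fun hbot => ?_
  have hsingle {u : ι → K} (hu : u ∈ U) (i : ι) (hui : u i ≠ 0) : Pi.single i 1 ∈ U := by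
    simpa [← Pi.single_smul, hui] using
      U.smul_mem (u i)⁻¹ (single_mem_of_diagonal_mulVec_mem hw hU hu i)
  obtain ⟨u, hu, hu0⟩ := (Submodule.ne_bot_iff U).1 hbot
  obtain ⟨j, hj⟩ := Function.ne_iff.1 hu0
  have hall (i : ι) : Pi.single i 1 ∈ U := by
    obtain ⟨M, hM, hMU⟩ := hentry i j
    exact hsingle (hMU _ (hsingle hu j hj)) i (by simpa [mulVec_single_one] using hM)
  rw [eq_top_iff, ← (Pi.basisFun K ι).span_eq, span_le]
  rintro _ ⟨i, rfl⟩
  simpa using hall i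

end Submodule

section ExtPow

variable {R : Type*} [CommRing R] {n m : ℕ}

theorem extPow_apply (g : Matrix (Fin n) (Fin n) R) (I J : MSub n m) :
    extPow n m g I J = (g.submatrix (I.1.orderEmbOfFin I.2) (J.1.orderEmbOfFin J.2)).det :=
  rfl

theorem extPow_smul (c : R) (g : Matrix (Fin n) (Fin n) R) :
    extPow n m (c • g) = c ^ m • extPow n m g := by
  ext I J
  rw [Matrix.smul_apply, extPow_apply, extPow_apply, smul_eq_mul]
  exact (det_smul _ c).trans (by rw [Fintype.card_fin]; rfl)

theorem extPow_diagonal (d : Fin n → R) :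
    extPow n m (diagonal d) = diagonal fun I : MSub n m => ∏ i ∈ I.1, d i := by
  ext I J
  rw [extPow_apply]
  rcases eq_or_ne I J with rfl | hIJ
  · rw [submatrix_diagonal _ _ (orderEmbOfFin _ _).injective, det_diagonal, diagonal_apply_eq]
    conv_rhs => rw [← I.1.map_orderEmbOfFin_univ I.2, prod_map]
    rfl
  · obtain ⟨j, hjJ, hjI⟩ : ∃ j ∈ J.1, j ∉ I.1 := not_subset.1 fun h =>
      hIJ (Subtype.ext (eq_of_subset_of_card_le h (by rw [I.2, J.2])).symm)
    obtain ⟨b, rfl⟩ : j ∈ Set.range (J.1.orderEmbOfFin J.2) := by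
      rwa [range_orderEmbOfFin]
    rw [diagonal_apply_ne _ hIJ]
    refine det_eq_zero_of_column_eq_zero b fun a => diagonal_apply_ne _ fun h => hjI ?_
    exact h ▸ orderEmbOfFin_mem _ _ _

theorem extPow_permMatrix_of_apply_orderEmbOfFin {I J : MSub n m} {σ : Equiv.Perm (Fin n)}
    (hσ : ∀ a, σ (I.1.orderEmbOfFin I.2 a) = J.1.orderEmbOfFin J.2 a) :
    extPow n m (σ.permMatrix R) I J = 1 := by
  rw [extPow_apply, ← det_one (R := R) (n := Fin m)]
  congr 1
  ext a b
  simp [PEquiv.toMatrix_apply, hσ, one_apply]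

theorem exists_perm_apply_orderEmbOfFin (I J : MSub n m) :
    ∃ σ : Equiv.Perm (Fin n), ∀ a, σ (I.1.orderEmbOfFin I.2 a) = J.1.orderEmbOfFin J.2 a := by
  let e : {x // x ∈ I.1} ≃ {x // x ∈ J.1} :=
    (I.1.orderIsoOfFin I.2).symm.toEquiv.trans (J.1.orderIsoOfFin J.2).toEquiv
  refine ⟨e.extendSubtype, fun a => ?_⟩
  rw [Equiv.extendSubtype_apply_of_mem e _ (orderEmbOfFin_mem _ _ a)]
  simp [e, ← coe_orderIsoOfFin_apply]

end ExtPow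

theorem Matrix.exists_ne_zero_det_smul_eq_one {K ι : Type*} [Field K] [IsAlgClosed K] [Fintype ι]
    [DecidableEq ι] [Nonempty ι] {g : Matrix ι ι K} (hg : g.det ≠ 0) :
    ∃ c : K, c ≠ 0 ∧ (c • g).det = 1 := by
  obtain ⟨c, hc⟩ := IsAlgClosed.exists_pow_nat_eq g.det⁻¹ (Fintype.card_pos (α := ι))
  refine ⟨c, ?_, by rw [det_smul, hc, inv_mul_cancel₀ hg]⟩
  rintro rfl
  rw [zero_pow Fintype.card_ne_zero] at hc
  exact inv_ne_zero hg hc.symm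

theorem exists_ne_zero_injOn_pow (K : Type*) [Field K] [Infinite K] (N : ℕ) :
    ∃ t : K, t ≠ 0 ∧ Set.InjOn (t ^ ·) (Set.Iio N) := by
  classical
  obtain ⟨t, ht⟩ := Infinite.exists_notMem_finset
    (insert 0 ((range N).biUnion fun k => Polynomial.nthRootsFinset (k + 1) (1 : K)))
  simp only [mem_insert, mem_biUnion, mem_range, Polynomial.mem_nthRootsFinset (Nat.succ_pos _),
    not_or, not_exists, not_and] at ht
  obtain ⟨ht0, ht1⟩ := ht
  refine ⟨t, ht0, fun a ha b hb hab => ?_⟩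
  by_contra hne
  wlog hlt : a < b generalizing a b
  · exact this b hb a ha hab.symm (Ne.symm hne) (by omega)
  have hpow : t ^ (b - a) = 1 := by
    rw [← mul_eq_left₀ (pow_ne_zero a ht0), ← pow_add, Nat.add_sub_cancel' hlt.le]
    exact hab.symm
  exact ht1 (b - a - 1) (by have := Set.mem_Iio.1 hb; omega)
    (by rwa [Nat.succ_eq_add_one, Nat.sub_add_cancel (by omega)])

theorem injective_prod_pow_two_pow {K : Type*} [Field K] {n : ℕ} {t : K}
    (ht : Set.InjOn (t ^ ·) (Set.Iio (2 ^ n))) :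
    Function.Injective fun s : Finset (Fin n) => ∏ i ∈ s, t ^ 2 ^ (i : ℕ) := by
  have hpow (s : Finset (Fin n)) :
      ∏ i ∈ s, t ^ 2 ^ (i : ℕ) = t ^ ∑ k ∈ s.map Fin.valEmbedding, 2 ^ k := by
    rw [prod_pow_eq_pow_sum, sum_map]
    rfl
  have hlt (s : Finset (Fin n)) : ∑ k ∈ s.map Fin.valEmbedding, 2 ^ k < 2 ^ n :=
    Nat.geomSum_lt le_rfl (by simp)
  intro s s' h
  simp only [hpow] at h
  exact map_injective Fin.valEmbedding (geomSum_injective le_rfl (ht (hlt s) (hlt s') h))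

/-- The representation of `SL_n(K)` on `⋀^m K^n` is irreducible for `K` algebraically
closed and `1 ≤ m ≤ n − 1`. -/
theorem exterior_power_irreducible {K : Type*} [Field K] [IsAlgClosed K] (n m : ℕ)
    (hm1 : 1 ≤ m) (hm2 : m ≤ n - 1) (U : Submodule K (MSub n m → K))
    (hU : ∀ g : Matrix (Fin n) (Fin n) K, g.det = 1 →
      ∀ u ∈ U, (extPow n m g).mulVec u ∈ U) :
    U = ⊥ ∨ U = ⊤ := by
  have : Nonempty (Fin n) := ⟨⟨0, by omega⟩⟩
  -- scaling by an `n`-th root of `(det g)⁻¹` puts an invertible `g` into `SL_n(K)`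
  have hGL {g : Matrix (Fin n) (Fin n) K} (hg : g.det ≠ 0) :
      ∃ c : K, c ≠ 0 ∧ ∀ u ∈ U, (c ^ m • extPow n m g) *ᵥ u ∈ U := by
    obtain ⟨c, hc, hdet⟩ := exists_ne_zero_det_smul_eq_one hg
    exact ⟨c, hc, fun u hu => extPow_smul c g ▸ hU _ hdet u hu⟩
  obtain ⟨t, ht0, ht⟩ := exists_ne_zero_injOn_pow K (2 ^ n)
  obtain ⟨c, hc, hT⟩ := hGL (g := diagonal fun i => t ^ 2 ^ (i : ℕ))
    (by simpa [prod_ne_zero_iff] using ht0)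
  refine Submodule.eq_bot_or_eq_top_of_diagonal_mulVec_mem
    (w := c ^ m • fun I : MSub n m => ∏ i ∈ I.1, t ^ 2 ^ (i : ℕ)) ?_ ?_ ?_
  · exact (smul_right_injective K (pow_ne_zero m hc)).comp
      ((injective_prod_pow_two_pow ht).comp Subtype.val_injective)
  · simpa [extPow_diagonal, ← diagonal_smul] using hT
  · intro I J
    obtain ⟨σ, hσ⟩ := exists_perm_apply_orderEmbOfFin I J
    obtain ⟨c, hc, hP⟩ := hGL (g := σ.permMatrix K)
      (by simpa using ((Equiv.Perm.sign σ).isUnit.map (Int.castRingHom K)).ne_zero)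
    exact ⟨_, by simp [extPow_permMatrix_of_apply_orderEmbOfFin hσ, hc], hP⟩
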